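/- For every real constant κ there exist finite sets X, Y, Z, a probability distribution P on X×Y×Z, and a classical channel R from Y to Y×Z satisfying R(P_Y) = P_YZ, such that κ · D_max( (id⊗R)(P_XY) ‖ P ) < I(X:Z|Y)_P (the max-relative entropy taken with the reconstructed state in the first argument). -/

import Mathlib

/-!
Take `Y` trivial and `X = Z = Fin n` with `P = ½·(uniform on the diagonal) + ½·(uniform off the
diagonal)`, and let `R` ignore its input and output the uniform distribution on `Y × Z`. Both
marginals of `P` are uniform, so `R(P_Y) = P_YZ`, and `(id ⊗ R)(P_XY)` is uniform on `X × Z`,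
hence at most `2 P` pointwise: `0 ≤ D_max ≤ 1`. Meanwhile `I(X:Z|Y) = I(X:Z) ≥ ½ log n - 1` is
unbounded in `n`.
-/

noncomputable section

namespace CIT

/-- A probability distribution on a finite set. -/
def IsDist {X : Type*} [Fintype X] (p : X → ℝ) : Prop :=
  (∀ x, 0 ≤ p x) ∧ ∑ x, p x = 1

/-- Support inclusion `supp p ⊆ supp q`. -/
def suppLe {X : Type*} (p q : X → ℝ) : Prop := ∀ x, p x ≠ 0 → q x ≠ 0

open Classical in
/-- Relative entropy (base 2), with `0·log 0 = 0`, `+∞` if the support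
condition fails. -/
def relEnt {X : Type*} [Fintype X] (p q : X → ℝ) : EReal :=
  if suppLe p q then ((∑ x, p x * Real.logb 2 (p x / q x) : ℝ) : EReal) else ⊤

open Classical in
/-- Max-relative entropy `D_max(p‖q) = log max_{x ∈ supp p} p(x)/q(x)`,
`+∞` if the support condition fails. -/
def dMax {X : Type*} [Fintype X] (p q : X → ℝ) : EReal :=
  if suppLe p q then
    ((Real.logb 2 (sSup {r : ℝ | ∃ x, p x ≠ 0 ∧ r = p x / q x}) : ℝ) : EReal)
  else ⊤

open Classical in
/-- Rényi relative entropy of order `α` (base 2), with `D_1 := D` and `+∞`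
when `α > 1` and the support condition fails. -/
def renyi {X : Type*} [Fintype X] (α : ℝ) (p q : X → ℝ) : EReal :=
  if α = 1 then relEnt p q
  else if 1 < α ∧ ¬ suppLe p q then ⊤
  else (((α - 1)⁻¹ * Real.logb 2 (∑ x, p x ^ α * q x ^ (1 - α)) : ℝ) : EReal)

/-- The `XY`-marginal of a tripartite distribution. -/
def margXY {X Y Z : Type*} [Fintype Z] (P : X × Y × Z → ℝ) : X × Y → ℝ :=
  fun t => ∑ z, P (t.1, t.2, z)

/-- The `YZ`-marginal of a tripartite distribution. -/
def margYZ {X Y Z : Type*} [Fintype X] (P : X × Y × Z → ℝ) : Y × Z → ℝ :=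
  fun t => ∑ x, P (x, t.1, t.2)

/-- The `Y`-marginal of a tripartite distribution. -/
def margY {X Y Z : Type*} [Fintype X] [Fintype Z] (P : X × Y × Z → ℝ) : Y → ℝ :=
  fun y => ∑ x, ∑ z, P (x, y, z)

/-- Conditional mutual information
`I(X:Z|Y)_P = Σ P(x,y,z) log( P(x,y,z)·P_Y(y) / (P_XY(x,y)·P_YZ(y,z)) )`. -/
def cmi {X Y Z : Type*} [Fintype X] [Fintype Y] [Fintype Z] (P : X × Y × Z → ℝ) : ℝ :=
  ∑ s : X × Y × Z,
    P s * Real.logb 2 (P s * margY P s.2.1 / (margXY P (s.1, s.2.1) * margYZ P (s.2.1, s.2.2)))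

/-- A classical channel from `Y` to `W`: a family of conditional distributions. -/
def IsChannel {Y W : Type*} [Fintype W] (R : Y → W → ℝ) : Prop :=
  ∀ y, (∀ w, 0 ≤ R y w) ∧ ∑ w, R y w = 1

/-- Action `(id ⊗ R)` of a channel `R : Y → W` on a joint distribution on `X × Y`. -/
def applyChan {X Y W : Type*} [Fintype Y] (R : Y → W → ℝ) (P : X × Y → ℝ) : X × W → ℝ :=
  fun t => ∑ y, P (t.1, y) * R y t.2

/-- Action of a channel `R : Y → W` on a distribution on `Y`. -/
def chanOnDist {Y W : Type*} [Fintype Y] (R : Y → W → ℝ) (q : Y → ℝ) : W → ℝ :=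
  fun w => ∑ y, q y * R y w

/-- Marginal channel `R_{Y→Y}(y'|y) = Σ_{z'} R(y',z'|y)`. -/
def margChan {Y Y' Z' : Type*} [Fintype Z'] (R : Y → Y' × Z' → ℝ) : Y → Y' → ℝ :=
  fun y y' => ∑ z', R y (y', z')

end CIT

open Finset

namespace CIT

theorem sum_ite_eq_add_card_sub_one_mul {α : Type*} [Fintype α] [DecidableEq α]
    (x : α) (a b : ℝ) :
    ∑ z, (if x = z then a else b) = a + ((Fintype.card α : ℝ) - 1) * b := by
  have hsplit : ∀ z, (if x = z then a else b) = b + if x = z then a - b else 0 := by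
    intro z; split_ifs <;> ring
  simp only [hsplit, sum_add_distrib, sum_const, sum_ite_eq, mem_univ, if_true, card_univ,
    nsmul_eq_mul]
  ring

theorem sum_ite_eq_add_card_sub_one_mul' {α : Type*} [Fintype α] [DecidableEq α]
    (z : α) (a b : ℝ) :
    ∑ x, (if x = z then a else b) = a + ((Fintype.card α : ℝ) - 1) * b := by
  simpa only [eq_comm] using sum_ite_eq_add_card_sub_one_mul z a b

theorem IsDist.exists_ne_zero_le {X : Type*} [Fintype X] {p q : X → ℝ}
    (hp : IsDist p) (hq : IsDist q) : ∃ x, p x ≠ 0 ∧ q x ≤ p x := by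
  by_contra! h
  have hle : ∀ x ∈ univ, p x ≤ q x := fun x _ =>
    (eq_or_ne (p x) 0).elim (fun h0 => h0 ▸ hq.1 x) fun hx => (h x hx).le
  obtain ⟨x, -, hx⟩ := exists_ne_zero_of_sum_ne_zero (hp.2.trans_ne one_ne_zero)
  have := sum_lt_sum hle ⟨x, mem_univ x, h x hx⟩
  linarith [hp.2, hq.2]

theorem dMax_mem_Icc {X : Type*} [Fintype X] {p q : X → ℝ} {c : ℝ}
    (hp : IsDist p) (hq : IsDist q) (hq_pos : ∀ x, 0 < q x) (hpq : ∀ x, p x ≤ c * q x) :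
    ∃ d : ℝ, dMax p q = d ∧ 0 ≤ d ∧ d ≤ Real.logb 2 c := by
  set S := {r : ℝ | ∃ x, p x ≠ 0 ∧ r = p x / q x}
  have hS_bdd : BddAbove S := by
    refine ((Set.finite_range fun x => p x / q x).subset ?_).bddAbove
    rintro _ ⟨x, -, rfl⟩
    exact ⟨x, rfl⟩
  obtain ⟨x₀, hx₀, hqp⟩ := hp.exists_ne_zero_le hq
  have h_one_le : 1 ≤ sSup S := le_csSup_of_le hS_bdd ⟨x₀, hx₀, rfl⟩
    ((one_le_div (hq_pos x₀)).2 hqp)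
  have h_le_c : sSup S ≤ c := by
    refine csSup_le ⟨_, x₀, hx₀, rfl⟩ ?_
    rintro _ ⟨x, -, rfl⟩
    exact (div_le_iff₀ (hq_pos x)).2 (hpq x)
  refine ⟨_, if_pos fun x _ => (hq_pos x).ne', ?_, ?_⟩
  · exact Real.logb_nonneg one_lt_two h_one_le
  · exact Real.logb_le_logb_of_le one_lt_two (by linarith) h_le_c

def diagMixture (n : ℕ) : Fin n × Fin 1 × Fin n → ℝ :=
  fun s => if s.1 = s.2.2 then 1 / (2 * n) else 1 / (2 * n * (n - 1))

def uniformRecovery (n : ℕ) : Fin 1 → Fin 1 × Fin n → ℝ := fun _ _ => 1 / n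

section DiagMixture

variable {n : ℕ} (hn : 2 ≤ n)
include hn

theorem diagMixture_pos (s : Fin n × Fin 1 × Fin n) : 0 < diagMixture n s := by
  have : (2 : ℝ) ≤ n := by exact_mod_cast hn
  unfold diagMixture
  split_ifs
  · positivity
  · have : (0 : ℝ) < n - 1 := by linarith
    positivity

theorem margXY_diagMixture (t : Fin n × Fin 1) : margXY (diagMixture n) t = 1 / n := by
  have : (2 : ℝ) ≤ n := by exact_mod_cast hn
  have : (n : ℝ) - 1 ≠ 0 := by linarith
  simp only [margXY, diagMixture, sum_ite_eq_add_card_sub_one_mul, Fintype.card_fin]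
  field_simp
  ring

theorem margYZ_diagMixture (t : Fin 1 × Fin n) : margYZ (diagMixture n) t = 1 / n := by
  have : (2 : ℝ) ≤ n := by exact_mod_cast hn
  have : (n : ℝ) - 1 ≠ 0 := by linarith
  simp only [margYZ, diagMixture, sum_ite_eq_add_card_sub_one_mul', Fintype.card_fin]
  field_simp
  ring

theorem sum_diagMixture_right (x : Fin n) (y : Fin 1) :
    ∑ z, diagMixture n (x, y, z) = 1 / n :=
  margXY_diagMixture hn (x, y)

theorem margY_diagMixture (y : Fin 1) : margY (diagMixture n) y = 1 := by
  have : (n : ℝ) ≠ 0 := by positivity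
  simp only [margY, sum_diagMixture_right hn, sum_const, card_univ, Fintype.card_fin,
    nsmul_eq_mul]
  field_simp

theorem isDist_diagMixture : IsDist (diagMixture n) := by
  refine ⟨fun s => (diagMixture_pos hn s).le, ?_⟩
  have : (n : ℝ) ≠ 0 := by positivity
  simp only [Fintype.sum_prod_type, sum_diagMixture_right hn, sum_const, card_univ,
    Fintype.card_fin, nsmul_eq_mul, Nat.cast_one]
  field_simp

theorem isChannel_uniformRecovery : IsChannel (uniformRecovery n) := by
  have : (n : ℝ) ≠ 0 := by positivity
  refine fun _ => ⟨fun _ => by unfold uniformRecovery; positivity, ?_⟩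
  simp only [uniformRecovery, sum_const, card_univ, Fintype.card_prod, Fintype.card_fin,
    nsmul_eq_mul, one_mul]
  field_simp

theorem chanOnDist_uniformRecovery :
    chanOnDist (uniformRecovery n) (margY (diagMixture n)) = margYZ (diagMixture n) := by
  ext t
  simp [chanOnDist, uniformRecovery, margY_diagMixture hn, margYZ_diagMixture hn]

theorem applyChan_uniformRecovery (t : Fin n × Fin 1 × Fin n) :
    applyChan (uniformRecovery n) (margXY (diagMixture n)) t = 1 / n ^ 2 := by
  simp only [applyChan, uniformRecovery, margXY_diagMixture hn, Fin.sum_univ_one]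
  ring

theorem isDist_applyChan_uniformRecovery :
    IsDist (applyChan (uniformRecovery n) (margXY (diagMixture n))) := by
  have : (n : ℝ) ≠ 0 := by positivity
  refine ⟨fun t => by rw [applyChan_uniformRecovery hn]; positivity, ?_⟩
  simp only [applyChan_uniformRecovery hn, sum_const, card_univ, Fintype.card_prod,
    Fintype.card_fin, nsmul_eq_mul]
  push_cast
  field_simp

theorem applyChan_uniformRecovery_le_two_mul (t : Fin n × Fin 1 × Fin n) :
    applyChan (uniformRecovery n) (margXY (diagMixture n)) t ≤ 2 * diagMixture n t := by
  have : (2 : ℝ) ≤ n := by exact_mod_cast hn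
  have : (0 : ℝ) < n - 1 := by linarith
  rw [applyChan_uniformRecovery hn]
  unfold diagMixture
  split_ifs <;> rw [div_le_iff₀ (by positivity)] <;> field_simp <;> nlinarith

theorem cmi_diagMixture :
    cmi (diagMixture n) = Real.logb 2 (n / 2) / 2 + Real.logb 2 (n / (2 * (n - 1))) / 2 := by
  have : (2 : ℝ) ≤ n := by exact_mod_cast hn
  have : (n : ℝ) - 1 ≠ 0 := by linarith
  have hterm : ∀ s : Fin n × Fin 1 × Fin n,
      diagMixture n s * Real.logb 2 (diagMixture n s * margY (diagMixture n) s.2.1 /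
        (margXY (diagMixture n) (s.1, s.2.1) * margYZ (diagMixture n) (s.2.1, s.2.2)))
      = if s.1 = s.2.2 then 1 / (2 * n) * Real.logb 2 (n / 2)
        else 1 / (2 * n * (n - 1)) * Real.logb 2 (n / (2 * (n - 1))) := by
    intro s
    rw [margY_diagMixture hn, margXY_diagMixture hn, margYZ_diagMixture hn]
    unfold diagMixture
    split_ifs <;> congr 2 <;> field_simp
  simp only [cmi, hterm, Fintype.sum_prod_type, sum_ite_eq_add_card_sub_one_mul, sum_const,
    card_univ, Fintype.card_fin, nsmul_eq_mul, Nat.cast_one, one_mul]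
  field_simp

theorem logb_div_two_sub_one_le_cmi_diagMixture :
    Real.logb 2 n / 2 - 1 ≤ cmi (diagMixture n) := by
  have : (2 : ℝ) ≤ n := by exact_mod_cast hn
  have h_diag : Real.logb 2 (n / 2) = Real.logb 2 n - 1 := by
    rw [Real.logb_div (by positivity) two_ne_zero, Real.logb_self_eq_one one_lt_two]
  have h_off : -1 ≤ Real.logb 2 (n / (2 * (n - 1))) := by
    calc (-1 : ℝ) = Real.logb 2 (1 / 2) := by
          rw [one_div, Real.logb_inv, Real.logb_self_eq_one one_lt_two]
      _ ≤ Real.logb 2 (n / (2 * (n - 1))) := by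
        refine Real.logb_le_logb_of_le one_lt_two (by norm_num) ?_
        rw [div_le_div_iff₀ two_pos (by linarith)]
        linarith
  rw [cmi_diagMixture hn, h_diag]
  linarith

end DiagMixture

end CIT

open CIT in
/-- for every constant `κ` there is a tripartite distribution
`P` and a channel `R` from `Y` to `Y×Z` with `R(P_Y) = P_YZ` such that
`κ · D_max((id⊗R)(P_XY) ‖ P) < I(X:Z|Y)_P`. -/
theorem large_cmi_good_recovery_swapped (κ : ℝ) :
    ∃ (nx ny nz : ℕ) (P : Fin nx × Fin ny × Fin nz → ℝ)
      (R : Fin ny → Fin ny × Fin nz → ℝ),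
      IsDist P ∧ IsChannel R ∧ chanOnDist R (margY P) = margYZ P ∧
        (κ : EReal) * dMax (applyChan R (margXY P)) P < ((cmi P : ℝ) : EReal) := by
  obtain ⟨m, hm⟩ := exists_nat_gt (2 * |κ| + 1)
  have hn : 2 ≤ 2 ^ (m + 1) := Nat.le_self_pow m.succ_ne_zero 2
  refine ⟨_, 1, _, diagMixture (2 ^ (m + 1)), uniformRecovery (2 ^ (m + 1)),
    isDist_diagMixture hn, isChannel_uniformRecovery hn, chanOnDist_uniformRecovery hn, ?_⟩
  obtain ⟨d, hd, hd_nonneg, hd_le⟩ := dMax_mem_Icc (isDist_applyChan_uniformRecovery hn)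
    (isDist_diagMixture hn) (diagMixture_pos hn) (applyChan_uniformRecovery_le_two_mul hn)
  have h_cmi := logb_div_two_sub_one_le_cmi_diagMixture hn
  rw [Nat.cast_pow, Nat.cast_ofNat, Real.logb_pow, Real.logb_self_eq_one one_lt_two,
    Nat.cast_succ] at h_cmi
  rw [Real.logb_self_eq_one one_lt_two] at hd_le
  rw [hd, ← EReal.coe_mul, EReal.coe_lt_coe_iff]
  calc κ * d ≤ |κ| := by nlinarith [abs_nonneg κ, le_abs_self κ, neg_abs_le κ]
    _ < cmi _ := by linarith
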